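/- arXiv:2202.02189 — 9 statements merged into one kernel-verified Lean document; each statement's English description precedes it below -/
import Mathlib

section
/- If ⊢₁ and ⊢₂ are compact (finitary) consequence relations, then their combination ⊢₁₂ — the least consequence relation on the union signature extending both — is also compact. -/
set_option autoImplicit false

namespace Paper

/-- Formulas over a signature: `C` is a universe of connective symbols with
arities `ar`, and a signature is a set `S` of connectives.  Variables are
indexed by `ℕ` (a countably infinite set). -/
inductive Fm (C : Type) (ar : C → ℕ) (S : Set C) : Type
  | var : ℕ → Fm C ar S
  | app : (c : C) → c ∈ S → (Fin (ar c) → Fm C ar S) → Fm C ar S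

variable {C : Type} {ar : C → ℕ}

/-- Application of a substitution. -/
def subst {S : Set C} (σ : ℕ → Fm C ar S) : Fm C ar S → Fm C ar S
  | .var n => σ n
  | .app c h args => .app c h (fun i => subst σ (args i))

/-- Embedding of formulas along a signature inclusion. -/
def emb {S0 S : Set C} (hS : S0 ⊆ S) : Fm C ar S0 → Fm C ar S
  | .var n => .var n
  | .app c h args => .app c (hS h) (fun i => emb hS (args i))

theorem unionLeft {S1 S2 : Set C} : S1 ⊆ S1 ∪ S2 := Set.subset_union_left
theorem unionRight {S1 S2 : Set C} : S2 ⊆ S1 ∪ S2 := Set.subset_union_right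

/-- Single-conclusion (Tarskian) consequence relation: reflexivity,
monotonicity, transitivity (cut) and substitution invariance. -/
def IsSC {S : Set C} (L : Set (Fm C ar S) → Fm C ar S → Prop) : Prop :=
  (∀ Γ A, A ∈ Γ → L Γ A) ∧
  (∀ Γ Γ' A, Γ ⊆ Γ' → L Γ A → L Γ' A) ∧
  (∀ Γ Δ A, (∀ B ∈ Δ, L Γ B) → L (Γ ∪ Δ) A → L Γ A) ∧
  (∀ σ Γ A, L Γ A → L (subst σ '' Γ) (subst σ A))

/-- Compactness of a single-conclusion relation. -/
def CompactSC {S : Set C} (L : Set (Fm C ar S) → Fm C ar S → Prop) : Prop :=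
  ∀ Γ A, L Γ A → ∃ Γ0, Γ0 ⊆ Γ ∧ Γ0.Finite ∧ L Γ0 A

/-- Image of a single-conclusion relation along a signature inclusion. -/
def embRelSC {S0 S : Set C} (hS : S0 ⊆ S)
    (L : Set (Fm C ar S0) → Fm C ar S0 → Prop) :
    Set (Fm C ar S) → Fm C ar S → Prop :=
  fun Γ A => ∃ Γ0 A0, L Γ0 A0 ∧ Γ = emb hS '' Γ0 ∧ A = emb hS A0

/-- `L` is the least single-conclusion logic containing `Base`. -/
def LeastSC {S : Set C} (Base L : Set (Fm C ar S) → Fm C ar S → Prop) : Prop :=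
  IsSC L ∧ (∀ Γ A, Base Γ A → L Γ A) ∧
  (∀ L', IsSC L' → (∀ Γ A, Base Γ A → L' Γ A) → ∀ Γ A, L Γ A → L' Γ A)

/-- `L` is the combination (fibring) of the single-conclusion logics
`L1`, `L2`: the least single-conclusion logic over `S1 ∪ S2` extending both. -/
def IsCombSC {S1 S2 : Set C}
    (L1 : Set (Fm C ar S1) → Fm C ar S1 → Prop)
    (L2 : Set (Fm C ar S2) → Fm C ar S2 → Prop)
    (L : Set (Fm C ar (S1 ∪ S2)) → Fm C ar (S1 ∪ S2) → Prop) : Prop :=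
  LeastSC (fun Γ A => embRelSC unionLeft L1 Γ A ∨ embRelSC unionRight L2 Γ A) L

/-- Multiple-conclusion consequence relation: overlap, dilution,
cut for sets, substitution invariance. -/
def IsMC {S : Set C} (Cn : Set (Fm C ar S) → Set (Fm C ar S) → Prop) : Prop :=
  (∀ Γ Δ, (Γ ∩ Δ).Nonempty → Cn Γ Δ) ∧
  (∀ Γ Δ Γ' Δ', Cn Γ Δ → Cn (Γ ∪ Γ') (Δ ∪ Δ')) ∧
  (∀ Γ Δ (Ω : Set (Fm C ar S)),
    (∀ Ω1 Ω2, Ω1 ∪ Ω2 = Ω → Ω1 ∩ Ω2 = ∅ → Cn (Γ ∪ Ω1) (Ω2 ∪ Δ)) → Cn Γ Δ) ∧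
  (∀ σ Γ Δ, Cn Γ Δ → Cn (subst σ '' Γ) (subst σ '' Δ))

def embRelMC {S0 S : Set C} (hS : S0 ⊆ S)
    (Cn : Set (Fm C ar S0) → Set (Fm C ar S0) → Prop) :
    Set (Fm C ar S) → Set (Fm C ar S) → Prop :=
  fun Γ Δ => ∃ Γ0 Δ0, Cn Γ0 Δ0 ∧ Γ = emb hS '' Γ0 ∧ Δ = emb hS '' Δ0

def LeastMC {S : Set C} (Base Cn : Set (Fm C ar S) → Set (Fm C ar S) → Prop) : Prop :=
  IsMC Cn ∧ (∀ Γ Δ, Base Γ Δ → Cn Γ Δ) ∧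
  (∀ Cn', IsMC Cn' → (∀ Γ Δ, Base Γ Δ → Cn' Γ Δ) → ∀ Γ Δ, Cn Γ Δ → Cn' Γ Δ)

def IsCombMC {S1 S2 : Set C}
    (C1 : Set (Fm C ar S1) → Set (Fm C ar S1) → Prop)
    (C2 : Set (Fm C ar S2) → Set (Fm C ar S2) → Prop)
    (Cn : Set (Fm C ar (S1 ∪ S2)) → Set (Fm C ar (S1 ∪ S2)) → Prop) : Prop :=
  LeastMC (fun Γ Δ => embRelMC unionLeft C1 Γ Δ ∨ embRelMC unionRight C2 Γ Δ) Cn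

/-- Multiple-conclusion relation determined by a set of bivaluations. -/
def mcBiv {S : Set C} (B : Set (Fm C ar S → Prop)) :
    Set (Fm C ar S) → Set (Fm C ar S) → Prop :=
  fun Γ Δ => ∀ b ∈ B, (∃ A ∈ Γ, ¬ b A) ∨ (∃ A ∈ Δ, b A)

/-- Single-conclusion relation determined by a set of bivaluations. -/
def scBiv {S : Set C} (B : Set (Fm C ar S → Prop)) :
    Set (Fm C ar S) → Fm C ar S → Prop :=
  fun Γ A => ∀ b ∈ B, (∀ B' ∈ Γ, b B') → b A

/-- A set of bivaluations is closed under substitutions. -/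
def SubstClosed {S : Set C} (B : Set (Fm C ar S → Prop)) : Prop :=
  ∀ b ∈ B, ∀ σ : ℕ → Fm C ar S, (fun A => b (subst σ A)) ∈ B

/-- Meet-closure of a set of bivaluations. -/
def meetCl {S : Set C} (B : Set (Fm C ar S → Prop)) : Set (Fm C ar S → Prop) :=
  {b | ∃ X, X ⊆ B ∧ b = fun A => ∀ b' ∈ X, b' A}

/-- A skeleton bijection for a signature inclusion `S0 ⊆ S`: it commutes
with `S0`-connectives and it maps variables and monoliths to variables. -/
structure Skel (ar : C → ℕ) {S0 S : Set C} (hS : S0 ⊆ S) where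
  toFun : Fm C ar S → Fm C ar S0
  bij : Function.Bijective toFun
  comm : ∀ (c : C) (hc : c ∈ S0) (args : Fin (ar c) → Fm C ar S),
    toFun (.app c (hS hc) args) = .app c hc (fun i => toFun (args i))
  mono : ∀ (c : C) (hc : c ∈ S) (args : Fin (ar c) → Fm C ar S),
    c ∉ S0 → ∃ n, toFun (.app c hc args) = .var n
  var : ∀ n : ℕ, ∃ m : ℕ, toFun (.var n) = .var m

/-- Extension of a set of bivaluations along the skeleton map. -/
def extBiv {S0 S : Set C} {hS : S0 ⊆ S} (sk : Skel ar hS)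
    (B : Set (Fm C ar S0 → Prop)) : Set (Fm C ar S → Prop) :=
  {b | ∃ b0 ∈ B, b = fun A => b0 (sk.toFun A)}

/-- Partial non-deterministic matrices (PNmatrices). -/
structure PN (C : Type) (ar : C → ℕ) (S : Set C) where
  V : Type
  D : Set V
  tbl : ∀ c : C, c ∈ S → (Fin (ar c) → V) → Set V

/-- Valuations of a PNmatrix. -/
def IsVal {S : Set C} (M : PN C ar S) (v : Fm C ar S → M.V) : Prop :=
  ∀ (c : C) (h : c ∈ S) (args : Fin (ar c) → Fm C ar S),
    v (.app c h args) ∈ M.tbl c h (fun i => v (args i))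

/-- Bivaluations induced by a PNmatrix. -/
def BVal {S : Set C} (M : PN C ar S) : Set (Fm C ar S → Prop) :=
  {b | ∃ v, IsVal M v ∧ b = fun A => v A ∈ M.D}

def scPN {S : Set C} (M : PN C ar S) : Set (Fm C ar S) → Fm C ar S → Prop :=
  scBiv (BVal M)

def mcPN {S : Set C} (M : PN C ar S) : Set (Fm C ar S) → Set (Fm C ar S) → Prop :=
  mcBiv (BVal M)

/-- Extension of a PNmatrix to a larger signature: new connectives are
interpreted fully non-deterministically. -/
def extPN {S0 S : Set C} (hS : S0 ⊆ S) (M : PN C ar S0) : PN C ar S where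
  V := M.V
  D := M.D
  tbl c _ args := {y | ∀ hc : c ∈ S0, y ∈ M.tbl c hc args}

/-- Strict product of two PNmatrices. -/
def sprod {S1 S2 : Set C} (M1 : PN C ar S1) (M2 : PN C ar S2) :
    PN C ar (S1 ∪ S2) where
  V := {p : M1.V × M2.V // p.1 ∈ M1.D ↔ p.2 ∈ M2.D}
  D := {p | p.val.1 ∈ M1.D ∧ p.val.2 ∈ M2.D}
  tbl c _ args :=
    {p | (∀ hc : c ∈ S1, p.val.1 ∈ M1.tbl c hc (fun i => (args i).val.1)) ∧
         (∀ hc : c ∈ S2, p.val.2 ∈ M2.tbl c hc (fun i => (args i).val.2))}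

/-- Theories of a single-conclusion relation. -/
def IsTheorySC {S : Set C} (L : Set (Fm C ar S) → Fm C ar S → Prop)
    (Γ : Set (Fm C ar S)) : Prop :=
  ∀ A, L Γ A → A ∈ Γ

/-- A PNmatrix is saturated if every consistent theory of its
single-conclusion logic is the set of designated formulas of a valuation. -/
def Saturated {S : Set C} (M : PN C ar S) : Prop :=
  ∀ Γ : Set (Fm C ar S), IsTheorySC (scPN M) Γ → Γ ≠ Set.univ →
    ∃ v, IsVal M v ∧ Γ = {A | v A ∈ M.D}

/-- The ω-power of a PNmatrix. -/
def omegaPow {S : Set C} (M : PN C ar S) : PN C ar S where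
  V := ℕ → M.V
  D := {x | ∀ i, x i ∈ M.D}
  tbl c h args := {y | ∀ i, y i ∈ M.tbl c h (fun k => args k i)}

/-- Strict homomorphisms of PNmatrices (rexpansions). -/
def IsHom {S0 S : Set C} (hS : S0 ⊆ S) (M : PN C ar S) (M0 : PN C ar S0)
    (h : M.V → M0.V) : Prop :=
  (∀ x, h x ∈ M0.D ↔ x ∈ M.D) ∧
  (∀ (c : C) (hc : c ∈ S0) (args : Fin (ar c) → M.V) (y : M.V),
    y ∈ M.tbl c (hS hc) args → h y ∈ M0.tbl c hc (fun i => h (args i)))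

/-- Sum of a family of PNmatrices over a common signature. -/
def psum {S : Set C} {I : Type} (Ms : I → PN C ar S) : PN C ar S where
  V := (i : I) × (Ms i).V
  D := {p | p.2 ∈ (Ms p.1).D}
  tbl c h args :=
    {p | ∃ xs : Fin (ar c) → (Ms p.1).V,
      (∀ k, args k = ⟨p.1, xs k⟩) ∧ p.2 ∈ (Ms p.1).tbl c h xs}

/-- Lindenbaum matrix with designated set `Γ`. -/
def lind {S : Set C} (Γ : Set (Fm C ar S)) : PN C ar S where
  V := Fm C ar S
  D := Γ
  tbl c h args := {Fm.app c h args}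

/-- Reduct of a PNmatrix to a subsignature. -/
def reduct {S0 S : Set C} (hS : S0 ⊆ S) (M : PN C ar S) : PN C ar S0 where
  V := M.V
  D := M.D
  tbl c hc := M.tbl c (hS hc)

/-- One-variable formulas (only the variable `0` occurs). -/
inductive OnlyVar0 {C : Type} {ar : C → ℕ} {S : Set C} : Fm C ar S → Prop
  | var : OnlyVar0 (.var 0)
  | app (c : C) (h : c ∈ S) (args : Fin (ar c) → Fm C ar S) :
      (∀ i, OnlyVar0 (args i)) → OnlyVar0 (.app c h args)

/-- `S_M(x)`: values of a one-variable `S0`-formula over valuations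
of `M` sending the variable to `x`. -/
def SMset {S0 S : Set C} (hS : S0 ⊆ S) (M : PN C ar S)
    (s : Fm C ar S0) (x : M.V) : Set M.V :=
  {w | ∃ v, IsVal M v ∧ v (.var 0) = x ∧ w = v (emb hS s)}

/-- `M` is `S0`-monadic. -/
def Monadic {S0 S : Set C} (hS : S0 ⊆ S) (M : PN C ar S) : Prop :=
  ∀ x y : M.V, x ≠ y → ∃ s : Fm C ar S0, OnlyVar0 s ∧
    (SMset hS M s x).Nonempty ∧ (SMset hS M s y).Nonempty ∧
    ((SMset hS M s x ⊆ M.D ∧ SMset hS M s y ∩ M.D = ∅) ∨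
     (SMset hS M s y ⊆ M.D ∧ SMset hS M s x ∩ M.D = ∅))

/-- Strict product of a PNmatrix over `S0 ⊆ S` with one over `S`
(the union of the signatures being `S`). -/
def sprodL {S0 S : Set C} (hS : S0 ⊆ S) (M1 : PN C ar S0) (M2 : PN C ar S) :
    PN C ar S where
  V := {p : M1.V × M2.V // p.1 ∈ M1.D ↔ p.2 ∈ M2.D}
  D := {p | p.val.1 ∈ M1.D ∧ p.val.2 ∈ M2.D}
  tbl c h args :=
    {p | (∀ hc : c ∈ S0, p.val.1 ∈ M1.tbl c hc (fun i => (args i).val.1)) ∧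
         p.val.2 ∈ M2.tbl c h (fun i => (args i).val.2)}

/-- All substitution instances (over `S1 ∪ S2`) of axiom schemata `Ax ⊆ Fm_{S2}`. -/
def axInst {S1 S2 : Set C} (Ax : Set (Fm C ar S2)) : Set (Fm C ar (S1 ∪ S2)) :=
  {B | ∃ A ∈ Ax, ∃ σ, B = subst σ (emb unionRight A)}

/-- The Nmatrix `M_Ax` associated to a set of axiom schemata. -/
def MAx (S1 : Set C) {S2 : Set C} (Ax : Set (Fm C ar S2)) : PN C ar (S1 ∪ S2) where
  V := {p : Fm C ar (S1 ∪ S2) × Bool // p.1 ∈ axInst (S1 := S1) Ax → p.2 = true}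
  D := {p | p.val.2 = true}
  tbl c h args := {p | p.val.1 = Fm.app c h (fun i => (args i).val.1)}


/-- the combination of compact single-conclusion logics is compact. -/
theorem statement0 {C : Type} {ar : C → ℕ} {S1 S2 : Set C}
    (L1 : Set (Fm C ar S1) → Fm C ar S1 → Prop)
    (L2 : Set (Fm C ar S2) → Fm C ar S2 → Prop)
    (L : Set (Fm C ar (S1 ∪ S2)) → Fm C ar (S1 ∪ S2) → Prop)
    (h1 : IsSC L1) (h2 : IsSC L2)
    (hc1 : CompactSC L1) (hc2 : CompactSC L2)
    (hL : IsCombSC L1 L2 L) :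
    CompactSC L := by
  classical
  obtain ⟨⟨Lrefl, Lmono, Lcut, Lsub⟩, hbase, hleast⟩ := hL
  set L' : Set (Fm C ar (S1 ∪ S2)) → Fm C ar (S1 ∪ S2) → Prop :=
    fun Γ A => ∃ Γ0, Γ0 ⊆ Γ ∧ Γ0.Finite ∧ L Γ0 A with hL'def
  have hSC' : IsSC L' := by
    refine ⟨?_, ?_, ?_, ?_⟩
    · intro Γ A hA
      exact ⟨{A}, Set.singleton_subset_iff.mpr hA, Set.finite_singleton A,
        Lrefl _ _ rfl⟩
    · rintro Γ Γ' A hsub ⟨Γ0, h0, hfin, hL0⟩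
      exact ⟨Γ0, h0.trans hsub, hfin, hL0⟩
    · rintro Γ Δ A hΔ ⟨Γ0, h0, hfin, hL0⟩
      choose f hf1 hf2 hf3 using fun B (hB : B ∈ Δ) => hΔ B hB
      set t : Fm C ar (S1 ∪ S2) → Set (Fm C ar (S1 ∪ S2)) :=
        fun B => if h : B ∈ Δ then f B h else ∅ with ht
      have htsub : ∀ B, t B ⊆ Γ := by
        intro B
        by_cases h : B ∈ Δ
        · simp only [ht, dif_pos h]; exact hf1 B h
        · simp only [ht, dif_neg h]; exact Set.empty_subset _
      have htfin : ∀ B, (t B).Finite := by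
        intro B
        by_cases h : B ∈ Δ
        · simp only [ht, dif_pos h]; exact hf2 B h
        · simp only [ht, dif_neg h]; exact Set.finite_empty
      have htL : ∀ B ∈ Δ, L (t B) B := by
        intro B h
        simp only [ht, dif_pos h]; exact hf3 B h
      refine ⟨(Γ0 ∩ Γ) ∪ ⋃ B ∈ (Γ0 ∩ Δ), t B, ?_, ?_, ?_⟩
      · apply Set.union_subset Set.inter_subset_right
        exact Set.iUnion₂_subset fun B _ => htsub B
      · exact ((hfin.inter_of_left Γ).union
          ((hfin.inter_of_left Δ).biUnion fun B _ => htfin B))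
      · set Γstar := (Γ0 ∩ Γ) ∪ ⋃ B ∈ (Γ0 ∩ Δ), t B with hΓstar
        have hsub0 : Γ0 ⊆ Γstar ∪ (Γ0 ∩ Δ) := by
          intro B hB
          rcases h0 hB with h | h
          · exact Or.inl (Or.inl ⟨hB, h⟩)
          · exact Or.inr ⟨hB, h⟩
        refine Lcut Γstar (Γ0 ∩ Δ) A ?_ (Lmono _ _ _ hsub0 hL0)
        intro B hB
        refine Lmono (t B) Γstar B ?_ (htL B hB.2)
        intro x hx
        exact Or.inr (Set.mem_biUnion hB hx)
    · rintro σ Γ A ⟨Γ0, h0, hfin, hL0⟩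
      exact ⟨subst σ '' Γ0, Set.image_mono h0, hfin.image _, Lsub σ _ _ hL0⟩
  have hbase' : ∀ Γ A,
      (embRelSC unionLeft L1 Γ A ∨ embRelSC unionRight L2 Γ A) → L' Γ A := by
    rintro Γ A (⟨Γ0, A0, h10, hΓ, hA⟩ | ⟨Γ0, A0, h20, hΓ, hA⟩)
    · obtain ⟨Γ1, hsub, hfin, h11⟩ := hc1 Γ0 A0 h10
      refine ⟨emb unionLeft '' Γ1, ?_, hfin.image _, ?_⟩
      · rw [hΓ]; exact Set.image_mono hsub
      · rw [hA]; exact hbase _ _ (Or.inl ⟨Γ1, A0, h11, rfl, rfl⟩)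
    · obtain ⟨Γ1, hsub, hfin, h21⟩ := hc2 Γ0 A0 h20
      refine ⟨emb unionRight '' Γ1, ?_, hfin.image _, ?_⟩
      · rw [hΓ]; exact Set.image_mono hsub
      · rw [hA]; exact hbase _ _ (Or.inr ⟨Γ1, A0, h21, rfl, rfl⟩)
  intro Γ A h
  exact hleast L' hSC' hbase' Γ A h

end Paper
end

section
/- If R₁ and R₂ are sets of inference rules over signatures Σ₁ and Σ₂ respectively, then the logic axiomatized by R₁ ∪ R₂ over Σ₁ ∪ Σ₂ equals the combination of the logic axiomatized by R₁ and the logic axiomatized by R₂. That is, ⊢_{R₁} • ⊢_{R₂} = ⊢_{R₁∪R₂}. -/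
set_option autoImplicit false

namespace Paper

variable {C : Type} {ar : C → ℕ}

theorem emb_subst {S0 S : Set C} (hS : S0 ⊆ S) (σ : ℕ → Fm C ar S0)
    (A : Fm C ar S0) :
    emb hS (subst σ A) = subst (fun n => emb hS (σ n)) (emb hS A) := by
  induction A with
  | var n => rfl
  | app c h args ih =>
    simp only [subst, emb]
    exact congrArg _ (funext fun i => ih i)

/-- Pullback of an SC relation along `emb` is SC. -/
theorem pullback_isSC {S0 S : Set C} (hS : S0 ⊆ S)
    (L : Set (Fm C ar S) → Fm C ar S → Prop) (hSC : IsSC L) :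
    IsSC (fun Γ A => L (emb hS '' Γ) (emb hS A)) := by
  obtain ⟨hrefl, hmono, hcut, hsub⟩ := hSC
  refine ⟨?_, ?_, ?_, ?_⟩
  · exact fun Γ A hA => hrefl _ _ ⟨A, hA, rfl⟩
  · exact fun Γ Γ' A hsubset h => hmono _ _ _ (Set.image_mono hsubset) h
  · intro Γ Δ A h1 h2
    refine hcut (emb hS '' Γ) (emb hS '' Δ) _ ?_ ?_
    · rintro B ⟨B0, hB0, rfl⟩; exact h1 B0 hB0
    · rw [← Set.image_union]; exact h2
  · intro σ Γ A h
    have := hsub (fun n => emb hS (σ n)) _ _ h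
    have heq : subst (fun n => emb hS (σ n)) '' (emb hS '' Γ)
        = emb hS '' (subst σ '' Γ) := by
      rw [← Set.image_comp, ← Set.image_comp]
      exact Set.image_congr' (fun x => (emb_subst hS σ x).symm)
    rw [heq, ← emb_subst] at this
    exact this

/-- joining calculi axiomatizes the combination:
`⊢_{R₁} • ⊢_{R₂} = ⊢_{R₁ ∪ R₂}`. -/
theorem statement1 {C : Type} {ar : C → ℕ} {S1 S2 : Set C}
    (R1 : Set (Fm C ar S1) → Fm C ar S1 → Prop)
    (R2 : Set (Fm C ar S2) → Fm C ar S2 → Prop)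
    (L1 : Set (Fm C ar S1) → Fm C ar S1 → Prop)
    (L2 : Set (Fm C ar S2) → Fm C ar S2 → Prop)
    (L : Set (Fm C ar (S1 ∪ S2)) → Fm C ar (S1 ∪ S2) → Prop)
    (hL1 : LeastSC R1 L1) (hL2 : LeastSC R2 L2)
    (hL : LeastSC
      (fun Γ A => embRelSC unionLeft R1 Γ A ∨ embRelSC unionRight R2 Γ A) L) :
    IsCombSC L1 L2 L := by
  obtain ⟨hLSC, hLbase, hLmin⟩ := hL
  refine ⟨hLSC, ?_, ?_⟩
  · -- L contains the embeddings of L1 and L2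
    rintro Γ A (⟨Γ0, A0, h0, rfl, rfl⟩ | ⟨Γ0, A0, h0, rfl, rfl⟩)
    · exact hL1.2.2 _ (pullback_isSC unionLeft L hLSC)
        (fun Γ' A' hR => hLbase _ _ (Or.inl ⟨Γ', A', hR, rfl, rfl⟩)) _ _ h0
    · exact hL2.2.2 _ (pullback_isSC unionRight L hLSC)
        (fun Γ' A' hR => hLbase _ _ (Or.inr ⟨Γ', A', hR, rfl, rfl⟩)) _ _ h0
  · -- minimality
    intro L' hSC' hbase'
    refine hLmin L' hSC' ?_
    rintro Γ A (⟨Γ0, A0, h0, rfl, rfl⟩ | ⟨Γ0, A0, h0, rfl, rfl⟩)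
    · exact hbase' _ _ (Or.inl ⟨Γ0, A0, hL1.2.1 _ _ h0, rfl, rfl⟩)
    · exact hbase' _ _ (Or.inr ⟨Γ0, A0, hL2.2.1 _ _ h0, rfl, rfl⟩)

end Paper
end

section
/- For every multiple-conclusion logic ⟨Σ, ⊳⟩ there exists a unique set of bivaluations B ⊆ BVal(Σ) with ⊳ = ⊳_B, namely B = {b : ¬(b⁻¹(1) ⊳ b⁻¹(0))}. Consequently ⊳_B ⊆ ⊳_{B'} if and only if B' ⊆ B. -/
set_option autoImplicit false

namespace Paper

variable {C : Type} {ar : C → ℕ}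

/-- If `b'` agrees with `b` pointwise (as truth values) then they are equal. -/
theorem biv_ext {S : Set C} {b b' : Fm C ar S → Prop}
    (h1 : ∀ A, b A → b' A) (h2 : ∀ A, ¬ b A → ¬ b' A) : b' = b := by
  funext A
  apply propext
  constructor
  · intro h
    by_contra hb
    exact h2 A hb h
  · exact h1 A

/-- A single bivaluation not in `B` witnesses failure of `mcBiv B` on its
true/false sets.  Conversely, failure of `mcBiv B b⁻¹(1) b⁻¹(0)` gives `b ∈ B`. -/
theorem mem_of_not_mcBiv {S : Set C} {B : Set (Fm C ar S → Prop)}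
    {b : Fm C ar S → Prop} (h : ¬ mcBiv B {A | b A} {A | ¬ b A}) : b ∈ B := by
  unfold mcBiv at h
  push_neg at h
  obtain ⟨b', hb', h1, h2⟩ := h
  have : b' = b := biv_ext (fun A hA => h1 A hA) (fun A hA => h2 A hA)
  exact this ▸ hb'

theorem not_mcBiv_self {S : Set C} {B : Set (Fm C ar S → Prop)}
    {b : Fm C ar S → Prop} (hb : b ∈ B) : ¬ mcBiv B {A | b A} {A | ¬ b A} := by
  intro h
  rcases h b hb with ⟨A, hA, hA'⟩ | ⟨A, hA, hA'⟩
  · exact hA' hA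
  · exact hA hA'

/-- every multiple-conclusion logic is characterized by a unique
set of bivaluations, namely `{b : ¬ (b⁻¹(1) ⊳ b⁻¹(0))}`; consequently
`⊳_B ⊆ ⊳_{B'}` iff `B' ⊆ B`. -/
theorem statement2 {C : Type} {ar : C → ℕ} {S : Set C}
    (Cn : Set (Fm C ar S) → Set (Fm C ar S) → Prop) (hCn : IsMC Cn) :
    (Cn = mcBiv {b | ¬ Cn {A | b A} {A | ¬ b A}} ∧
      ∀ B : Set (Fm C ar S → Prop), Cn = mcBiv B →
        B = {b | ¬ Cn {A | b A} {A | ¬ b A}}) ∧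
    (∀ B B' : Set (Fm C ar S → Prop),
      (∀ Γ Δ, mcBiv B Γ Δ → mcBiv B' Γ Δ) ↔ B' ⊆ B) := by
  obtain ⟨hov, hdil, hcut, -⟩ := hCn
  set B0 : Set (Fm C ar S → Prop) := {b | ¬ Cn {A | b A} {A | ¬ b A}} with hB0
  have hchar : Cn = mcBiv B0 := by
    funext Γ Δ
    apply propext
    constructor
    · intro h b hb
      by_contra hc
      push_neg at hc
      obtain ⟨h1, h2⟩ := hc
      apply hb
      have hd : Cn (Γ ∪ {A | b A}) (Δ ∪ {A | ¬ b A}) := hdil _ _ _ _ h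
      have e1 : Γ ∪ {A | b A} = {A | b A} :=
        Set.union_eq_self_of_subset_left (fun A hA => h1 A hA)
      have e2 : Δ ∪ {A | ¬ b A} = {A | ¬ b A} :=
        Set.union_eq_self_of_subset_left (fun A hA => h2 A hA)
      rwa [e1, e2] at hd
    · intro h
      apply hcut Γ Δ Set.univ
      intro Ω1 Ω2 hun hdisj
      by_cases hc : Cn Ω1 Ω2
      · have := hdil Ω1 Ω2 Γ Δ hc
        rwa [Set.union_comm Ω1 Γ] at this
      · have e1 : {A | A ∈ Ω1} = Ω1 := rfl
        have e2 : {A : Fm C ar S | ¬ A ∈ Ω1} = Ω2 := by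
          ext A
          simp only [Set.mem_setOf_eq]
          constructor
          · intro hA
            have hu : A ∈ Ω1 ∪ Ω2 := hun ▸ Set.mem_univ A
            rcases hu with h' | h'
            · exact absurd h' hA
            · exact h'
          · intro hA hA1
            exact Set.eq_empty_iff_forall_notMem.mp hdisj A ⟨hA1, hA⟩
        have hb : (fun A => A ∈ Ω1) ∈ B0 := by
          simp only [hB0, Set.mem_setOf_eq, e1, e2]
          exact hc
        rcases h _ hb with ⟨A, hA, hA'⟩ | ⟨A, hA, hA'⟩
        · exact hov _ _ ⟨A, Or.inl hA, Or.inl (e2 ▸ hA')⟩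
        · exact hov _ _ ⟨A, Or.inr hA', Or.inr hA⟩
  refine ⟨⟨hchar, ?_⟩, ?_⟩
  · intro B hB
    ext b
    constructor
    · intro hb
      have h1 := not_mcBiv_self hb
      rw [← hB] at h1
      exact h1
    · intro hb
      have h1 : ¬ Cn {A | b A} {A | ¬ b A} := hb
      rw [hB] at h1
      exact mem_of_not_mcBiv h1
  · intro B B'
    constructor
    · intro hmono b' hb'
      have h1 : ¬ mcBiv B' {A | b' A} {A | ¬ b' A} := not_mcBiv_self hb'
      have h2 : ¬ mcBiv B {A | b' A} {A | ¬ b' A} := fun h => h1 (hmono _ _ h)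
      exact mem_of_not_mcBiv h2
    · intro hsub Γ Δ h b hb
      exact h b (hsub hb)


end Paper
end

section
/- Let B₁ ⊆ BVal(Σ₁) and B₂ ⊆ BVal(Σ₂) be sets of bivaluations closed under substitutions. Then the combination of the multiple-conclusion logics ⊳_{B₁} and ⊳_{B₂} equals ⊳ over Σ₁ ∪ Σ₂ characterized by B₁^{Σ₁∪Σ₂} ∩ B₂^{Σ₁∪Σ₂}, where B^Σ denotes the extension of B to the larger signature Σ via the skeleton map. -/
set_option autoImplicit false

namespace Paper

variable {C : Type} {ar : C → ℕ}

section Statement3Aux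

variable {C : Type} {ar : C → ℕ}

instance fmNonempty {S : Set C} : Nonempty (Fm C ar S) := ⟨.var 0⟩

noncomputable def skInv {S0 S : Set C} {hS : S0 ⊆ S} (sk : Skel ar hS) :
    Fm C ar S0 → Fm C ar S := Function.invFun sk.toFun

theorem skInv_left {S0 S : Set C} {hS : S0 ⊆ S} (sk : Skel ar hS) (A : Fm C ar S) :
    skInv sk (sk.toFun A) = A := Function.leftInverse_invFun sk.bij.injective A

theorem skInv_right {S0 S : Set C} {hS : S0 ⊆ S} (sk : Skel ar hS) (A : Fm C ar S0) :
    sk.toFun (skInv sk A) = A := Function.rightInverse_invFun sk.bij.surjective A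

noncomputable def skSub {S0 S : Set C} {hS : S0 ⊆ S} (sk : Skel ar hS)
    (σ : ℕ → Fm C ar S) : ℕ → Fm C ar S0 :=
  fun m => sk.toFun (subst σ (skInv sk (.var m)))

theorem sk_subst {S0 S : Set C} {hS : S0 ⊆ S} (sk : Skel ar hS)
    (σ : ℕ → Fm C ar S) (A : Fm C ar S) :
    sk.toFun (subst σ A) = subst (skSub sk σ) (sk.toFun A) := by
  induction A with
  | var n =>
    obtain ⟨m, hm⟩ := sk.var n
    rw [hm]
    show sk.toFun (subst σ (.var n)) = skSub sk σ m
    unfold skSub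
    rw [← hm, skInv_left]
  | app c h args ih =>
    by_cases hc : c ∈ S0
    · have e1 : sk.toFun (Fm.app c h args)
          = .app c hc (fun i => sk.toFun (args i)) := sk.comm c hc args
      have e2 : sk.toFun (subst σ (Fm.app c h args))
          = .app c hc (fun i => sk.toFun (subst σ (args i))) :=
        sk.comm c hc (fun i => subst σ (args i))
      rw [e2, e1]
      show _ = Fm.app c hc (fun i => subst (skSub sk σ) (sk.toFun (args i)))
      congr 1
      funext i
      exact ih i
    · obtain ⟨m, hm⟩ := sk.mono c h args hc
      rw [hm]
      show sk.toFun (subst σ (Fm.app c h args)) = skSub sk σ m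
      unfold skSub
      rw [← hm, skInv_left]

theorem sk_emb {S0 S : Set C} {hS : S0 ⊆ S} (sk : Skel ar hS) (A : Fm C ar S0) :
    sk.toFun (emb hS A) = subst (fun n => sk.toFun (.var n)) A := by
  induction A with
  | var n => rfl
  | app c hc args ih =>
    show sk.toFun (.app c (hS hc) (fun i => emb hS (args i))) = _
    rw [sk.comm c hc (fun i => emb hS (args i))]
    show Fm.app c hc _ = Fm.app c hc _
    congr 1
    funext i
    exact ih i

theorem skInv_emb {S0 S : Set C} {hS : S0 ⊆ S} (sk : Skel ar hS) (A : Fm C ar S0) :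
    subst (fun n => skInv sk (.var n)) (emb hS A) = skInv sk A := by
  induction A with
  | var n => rfl
  | app c hc args ih =>
    apply sk.bij.injective
    rw [skInv_right]
    show sk.toFun (.app c (hS hc)
      (fun i => subst (fun n => skInv sk (.var n)) (emb hS (args i)))) = _
    rw [sk.comm c hc]
    show Fm.app c hc _ = Fm.app c hc _
    congr 1
    funext i
    rw [ih i, skInv_right]

theorem recover {S0 S : Set C} {hS : S0 ⊆ S} (sk : Skel ar hS)
    (B0 : Set (Fm C ar S0 → Prop))
    (Cn' : Set (Fm C ar S) → Set (Fm C ar S) → Prop)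
    (hMC' : IsMC Cn')
    (hBase : ∀ Γ0 Δ0, mcBiv B0 Γ0 Δ0 → Cn' (emb hS '' Γ0) (emb hS '' Δ0))
    (T U : Set (Fm C ar S)) (hTU : ¬ Cn' T U)
    (hcov : ∀ A, A ∈ T ∨ A ∈ U)
    (hdisj : ∀ A, A ∈ T → A ∈ U → False) :
    (fun A => skInv sk A ∈ T) ∈ B0 := by
  classical
  set Γ0 : Set (Fm C ar S0) := {A | skInv sk A ∈ T} with hΓ0
  have hnc : ¬ mcBiv B0 Γ0 Γ0ᶜ := by
    intro h
    have h1 : Cn' (emb hS '' Γ0) (emb hS '' Γ0ᶜ) := hBase _ _ h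
    have h2 := hMC'.2.2.2 (fun n => skInv sk (.var n)) _ _ h1
    have e1 : subst (fun n => skInv sk (.var n)) '' (emb hS '' Γ0)
        = skInv sk '' Γ0 := by
      rw [← Set.image_comp]
      exact Set.image_congr (fun A _ => skInv_emb sk A)
    have e2 : subst (fun n => skInv sk (.var n)) '' (emb hS '' Γ0ᶜ)
        = skInv sk '' Γ0ᶜ := by
      rw [← Set.image_comp]
      exact Set.image_congr (fun A _ => skInv_emb sk A)
    rw [e1, e2] at h2
    have hsub1 : skInv sk '' Γ0 ⊆ T := by rintro _ ⟨A, hA, rfl⟩; exact hA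
    have hsub2 : skInv sk '' Γ0ᶜ ⊆ U := by
      rintro _ ⟨A, hA, rfl⟩
      rcases hcov (skInv sk A) with h' | h'
      · exact absurd h' hA
      · exact h'
    have h3 := hMC'.2.1 _ _ T U h2
    rw [Set.union_eq_self_of_subset_left hsub1,
        Set.union_eq_self_of_subset_left hsub2] at h3
    exact hTU h3
  unfold mcBiv at hnc
  push_neg at hnc
  obtain ⟨b0, hb0, h1, h2⟩ := hnc
  have hbeq : (fun A => skInv sk A ∈ T) = b0 := by
    funext A
    by_cases hA : skInv sk A ∈ T
    · exact propext (iff_of_true hA (h1 A hA))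
    · exact propext (iff_of_false hA (h2 A hA))
  rw [hbeq]
  exact hb0

end Statement3Aux

/-- the combination of the multiple-conclusion logics of `B₁`, `B₂`
is the logic of `B₁^{Σ₁∪Σ₂} ∩ B₂^{Σ₁∪Σ₂}`. -/
theorem statement3 {C : Type} {ar : C → ℕ} {S1 S2 : Set C}
    (B1 : Set (Fm C ar S1 → Prop)) (B2 : Set (Fm C ar S2 → Prop))
    (hB1 : SubstClosed B1) (hB2 : SubstClosed B2)
    (sk1 : Skel ar (unionLeft : S1 ⊆ S1 ∪ S2))
    (sk2 : Skel ar (unionRight : S2 ⊆ S1 ∪ S2)) :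
    IsCombMC (mcBiv B1) (mcBiv B2) (mcBiv (extBiv sk1 B1 ∩ extBiv sk2 B2)) := by
  classical
  refine ⟨⟨?_, ?_, ?_, ?_⟩, ?_, ?_⟩
  · -- overlap
    rintro Γ Δ ⟨A, hAΓ, hAΔ⟩ b hb
    by_cases h : b A
    · exact Or.inr ⟨A, hAΔ, h⟩
    · exact Or.inl ⟨A, hAΓ, h⟩
  · -- dilution
    intro Γ Δ Γ' Δ' h b hb
    rcases h b hb with ⟨A, hA, hbA⟩ | ⟨A, hA, hbA⟩
    · exact Or.inl ⟨A, Or.inl hA, hbA⟩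
    · exact Or.inr ⟨A, Or.inl hA, hbA⟩
  · -- cut for sets
    intro Γ Δ Ω h b hb
    have hu : (Ω ∩ {A | b A}) ∪ (Ω \ {A | b A}) = Ω := Set.inter_union_diff Ω _
    have hd : (Ω ∩ {A | b A}) ∩ (Ω \ {A | b A}) = ∅ := by
      ext A; simp only [Set.mem_inter_iff, Set.mem_diff, Set.mem_setOf_eq,
        Set.mem_empty_iff_false, iff_false]
      tauto
    rcases h _ _ hu hd b hb with ⟨A, hA, hbA⟩ | ⟨A, hA, hbA⟩
    · rcases hA with hA | hA
      · exact Or.inl ⟨A, hA, hbA⟩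
      · exact absurd hA.2 hbA
    · rcases hA with hA | hA
      · exact absurd hbA hA.2
      · exact Or.inr ⟨A, hA, hbA⟩
  · -- substitution
    intro σ Γ Δ h b hb
    have hb' : (fun A => b (subst σ A)) ∈ extBiv sk1 B1 ∩ extBiv sk2 B2 := by
      constructor
      · obtain ⟨b1, hb1, he⟩ := hb.1
        refine ⟨fun X => b1 (subst (skSub sk1 σ) X), hB1 b1 hb1 _, ?_⟩
        funext A
        rw [he]
        show b1 (sk1.toFun (subst σ A)) = _
        rw [sk_subst]
      · obtain ⟨b2, hb2, he⟩ := hb.2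
        refine ⟨fun X => b2 (subst (skSub sk2 σ) X), hB2 b2 hb2 _, ?_⟩
        funext A
        rw [he]
        show b2 (sk2.toFun (subst σ A)) = _
        rw [sk_subst]
    rcases h _ hb' with ⟨A, hA, hbA⟩ | ⟨A, hA, hbA⟩
    · exact Or.inl ⟨subst σ A, Set.mem_image_of_mem _ hA, hbA⟩
    · exact Or.inr ⟨subst σ A, Set.mem_image_of_mem _ hA, hbA⟩
  · -- extends the base
    rintro Γ Δ (⟨Γ0, Δ0, h0, rfl, rfl⟩ | ⟨Γ0, Δ0, h0, rfl, rfl⟩)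
    · intro b hb
      obtain ⟨b1, hb1, rfl⟩ := hb.1
      rcases h0 _ (hB1 b1 hb1 (fun n => sk1.toFun (.var n)))
        with ⟨A, hA, hnA⟩ | ⟨A, hA, hA'⟩
      · refine Or.inl ⟨emb unionLeft A, Set.mem_image_of_mem _ hA, ?_⟩
        show ¬ b1 (sk1.toFun (emb unionLeft A))
        rw [sk_emb]
        exact hnA
      · refine Or.inr ⟨emb unionLeft A, Set.mem_image_of_mem _ hA, ?_⟩
        show b1 (sk1.toFun (emb unionLeft A))
        rw [sk_emb]
        exact hA'
    · intro b hb
      obtain ⟨b2, hb2, rfl⟩ := hb.2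
      rcases h0 _ (hB2 b2 hb2 (fun n => sk2.toFun (.var n)))
        with ⟨A, hA, hnA⟩ | ⟨A, hA, hA'⟩
      · refine Or.inl ⟨emb unionRight A, Set.mem_image_of_mem _ hA, ?_⟩
        show ¬ b2 (sk2.toFun (emb unionRight A))
        rw [sk_emb]
        exact hnA
      · refine Or.inr ⟨emb unionRight A, Set.mem_image_of_mem _ hA, ?_⟩
        show b2 (sk2.toFun (emb unionRight A))
        rw [sk_emb]
        exact hA'
  · -- minimality
    intro Cn' hMC' hBase' Γ Δ hΓΔ
    by_contra hnot
    have hex : ¬ ∀ Ω1 Ω2, Ω1 ∪ Ω2 = (Set.univ : Set (Fm C ar (S1 ∪ S2))) →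
        Ω1 ∩ Ω2 = ∅ → Cn' (Γ ∪ Ω1) (Ω2 ∪ Δ) :=
      fun h => hnot (hMC'.2.2.1 Γ Δ Set.univ h)
    push_neg at hex
    obtain ⟨Ω1, Ω2, hu, hd, hT⟩ := hex
    set T := Γ ∪ Ω1 with hTdef
    set U := Ω2 ∪ Δ with hUdef
    have hcov : ∀ A, A ∈ T ∨ A ∈ U := by
      intro A
      have hA : A ∈ Ω1 ∪ Ω2 := hu ▸ Set.mem_univ A
      rcases hA with h | h
      · exact Or.inl (Or.inr h)
      · exact Or.inr (Or.inl h)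
    have hdisj : ∀ A, A ∈ T → A ∈ U → False := fun A h1 h2 =>
      hT (hMC'.1 T U ⟨A, h1, h2⟩)
    have hr1 := recover sk1 B1 Cn' hMC'
      (fun Γ0 Δ0 h => hBase' _ _ (Or.inl ⟨Γ0, Δ0, h, rfl, rfl⟩)) T U hT hcov hdisj
    have hr2 := recover sk2 B2 Cn' hMC'
      (fun Γ0 Δ0 h => hBase' _ _ (Or.inr ⟨Γ0, Δ0, h, rfl, rfl⟩)) T U hT hcov hdisj
    have hbB : (fun A => A ∈ T) ∈ extBiv sk1 B1 ∩ extBiv sk2 B2 := by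
      constructor
      · refine ⟨_, hr1, ?_⟩
        funext A
        rw [skInv_left]
      · refine ⟨_, hr2, ?_⟩
        funext A
        rw [skInv_left]
    rcases hΓΔ _ hbB with ⟨A, hA, hnA⟩ | ⟨A, hA, hA'⟩
    · exact hnA (Or.inl hA)
    · exact hdisj A hA' (Or.inr hA)

end Paper
end

section
/- Let ⊳₁₂ be the combination of multiple-conclusion logics ⊳₁ and ⊳₂ over signatures Σ₁, Σ₂. Then for all sets Γ, Δ of formulas over Σ₁ ∪ Σ₂: Γ ⊳₁₂ Δ if and only if for every partition ⟨Ω₁, Ω₂⟩ of the set of all formulas over Σ₁ ∪ Σ₂, there is k ∈ {1,2} such that Γ ∪ Ω₁ ⊳ₖ^{Σ₁∪Σ₂} Ω₂ ∪ Δ, where ⊳ₖ^{Σ₁∪Σ₂} is the extension of ⊳ₖ to the combined signature. -/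
set_option autoImplicit false

namespace Paper

variable {C : Type} {ar : C → ℕ}

theorem mc_mono {S : Set C} {E : Set (Fm C ar S) → Set (Fm C ar S) → Prop}
    (hE : IsMC E) {Γ Δ Γ' Δ' : Set (Fm C ar S)}
    (hΓ : Γ ⊆ Γ') (hΔ : Δ ⊆ Δ') (h : E Γ Δ) : E Γ' Δ' := by
  have := hE.2.1 Γ Δ Γ' Δ' h
  rwa [Set.union_eq_self_of_subset_left hΓ, Set.union_eq_self_of_subset_left hΔ] at this

/-- abstract characterization of the combined multiple-conclusion
logic via partitions of the set of all formulas. -/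
theorem statement4 {C : Type} {ar : C → ℕ} {S1 S2 : Set C}
    (C1 : Set (Fm C ar S1) → Set (Fm C ar S1) → Prop)
    (C2 : Set (Fm C ar S2) → Set (Fm C ar S2) → Prop)
    (C12 E1 E2 : Set (Fm C ar (S1 ∪ S2)) → Set (Fm C ar (S1 ∪ S2)) → Prop)
    (h1 : IsMC C1) (h2 : IsMC C2)
    (hC : IsCombMC C1 C2 C12)
    (hE1 : LeastMC (embRelMC unionLeft C1) E1)
    (hE2 : LeastMC (embRelMC unionRight C2) E2) :
    ∀ Γ Δ, C12 Γ Δ ↔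
      ∀ Ω1 Ω2 : Set (Fm C ar (S1 ∪ S2)), Ω1 ∪ Ω2 = Set.univ → Ω1 ∩ Ω2 = ∅ →
        E1 (Γ ∪ Ω1) (Ω2 ∪ Δ) ∨ E2 (Γ ∪ Ω1) (Ω2 ∪ Δ) := by
  obtain ⟨hC12mc, hC12base, hC12least⟩ := hC
  obtain ⟨hE1mc, hE1base, hE1least⟩ := hE1
  obtain ⟨hE2mc, hE2base, hE2least⟩ := hE2
  have hE1le : ∀ Γ Δ, E1 Γ Δ → C12 Γ Δ :=
    hE1least C12 hC12mc (fun Γ Δ h => hC12base Γ Δ (Or.inl h))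
  have hE2le : ∀ Γ Δ, E2 Γ Δ → C12 Γ Δ :=
    hE2least C12 hC12mc (fun Γ Δ h => hC12base Γ Δ (Or.inr h))
  -- the candidate relation
  set Cn' : Set (Fm C ar (S1 ∪ S2)) → Set (Fm C ar (S1 ∪ S2)) → Prop :=
    fun Γ Δ => ∀ Ω1 Ω2 : Set (Fm C ar (S1 ∪ S2)), Ω1 ∪ Ω2 = Set.univ →
      Ω1 ∩ Ω2 = ∅ → E1 (Γ ∪ Ω1) (Ω2 ∪ Δ) ∨ E2 (Γ ∪ Ω1) (Ω2 ∪ Δ) with hCn'def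
  have hCn'mc : IsMC Cn' := by
    refine ⟨?_, ?_, ?_, ?_⟩
    · -- overlap
      intro Γ Δ ⟨A, hA1, hA2⟩ Ω1 Ω2 _ _
      exact Or.inl (hE1mc.1 _ _ ⟨A, Or.inl hA1, Or.inr hA2⟩)
    · -- dilution
      intro Γ Δ Γ' Δ' h Ω1 Ω2 hu hd
      have hsub1 : Γ ∪ Ω1 ⊆ (Γ ∪ Γ') ∪ Ω1 := by
        intro x hx
        rcases hx with hx | hx
        · exact Or.inl (Or.inl hx)
        · exact Or.inr hx
      have hsub2 : Ω2 ∪ Δ ⊆ Ω2 ∪ (Δ ∪ Δ') := by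
        intro x hx
        rcases hx with hx | hx
        · exact Or.inl hx
        · exact Or.inr (Or.inl hx)
      rcases h Ω1 Ω2 hu hd with h | h
      · exact Or.inl (mc_mono hE1mc hsub1 hsub2 h)
      · exact Or.inr (mc_mono hE2mc hsub1 hsub2 h)
    · -- cut for sets
      intro Γ Δ Ω h Θ1 Θ2 hu hd
      have hu' : (Ω ∩ Θ1) ∪ (Ω ∩ Θ2) = Ω := by
        rw [← Set.inter_union_distrib_left, hu, Set.inter_univ]
      have hd' : (Ω ∩ Θ1) ∩ (Ω ∩ Θ2) = ∅ := by
        rw [Set.eq_empty_iff_forall_notMem]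
        rintro x ⟨⟨_, hx1⟩, _, hx2⟩
        exact (Set.eq_empty_iff_forall_notMem.mp hd x) ⟨hx1, hx2⟩
      have h' := h (Ω ∩ Θ1) (Ω ∩ Θ2) hu' hd' Θ1 Θ2 hu hd
      have hsub1 : (Γ ∪ (Ω ∩ Θ1)) ∪ Θ1 ⊆ Γ ∪ Θ1 := by
        intro x hx
        rcases hx with (hx | hx) | hx
        exacts [Or.inl hx, Or.inr hx.2, Or.inr hx]
      have hsub2 : Θ2 ∪ ((Ω ∩ Θ2) ∪ Δ) ⊆ Θ2 ∪ Δ := by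
        intro x hx
        rcases hx with hx | (hx | hx)
        exacts [Or.inl hx, Or.inl hx.2, Or.inr hx]
      rcases h' with h' | h'
      · exact Or.inl (mc_mono hE1mc hsub1 hsub2 h')
      · exact Or.inr (mc_mono hE2mc hsub1 hsub2 h')
    · -- substitution invariance
      intro σ Γ Δ h Θ1 Θ2 hu hd
      have hu' : subst σ ⁻¹' Θ1 ∪ subst σ ⁻¹' Θ2 = Set.univ := by
        rw [← Set.preimage_union, hu, Set.preimage_univ]
      have hd' : subst σ ⁻¹' Θ1 ∩ subst σ ⁻¹' Θ2 = ∅ := by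
        rw [← Set.preimage_inter, hd, Set.preimage_empty]
      have h' := h _ _ hu' hd'
      have im1 : subst σ '' (subst σ ⁻¹' Θ1) ⊆ Θ1 := Set.image_preimage_subset _ _
      have im2 : subst σ '' (subst σ ⁻¹' Θ2) ⊆ Θ2 := Set.image_preimage_subset _ _
      have hsub1 : subst σ '' (Γ ∪ subst σ ⁻¹' Θ1) ⊆ subst σ '' Γ ∪ Θ1 := by
        rw [Set.image_union]
        exact Set.union_subset_union_right _ im1
      have hsub2 : subst σ '' (subst σ ⁻¹' Θ2 ∪ Δ) ⊆ Θ2 ∪ subst σ '' Δ := by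
        rw [Set.image_union]
        exact Set.union_subset_union_left _ im2
      rcases h' with h' | h'
      · exact Or.inl (mc_mono hE1mc hsub1 hsub2 (hE1mc.2.2.2 σ _ _ h'))
      · exact Or.inr (mc_mono hE2mc hsub1 hsub2 (hE2mc.2.2.2 σ _ _ h'))
  have hCn'base : ∀ Γ Δ, (embRelMC unionLeft C1 Γ Δ ∨ embRelMC unionRight C2 Γ Δ) →
      Cn' Γ Δ := by
    intro Γ Δ h Ω1 Ω2 _ _
    rcases h with h | h
    · exact Or.inl (mc_mono hE1mc Set.subset_union_left Set.subset_union_right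
        (hE1base Γ Δ h))
    · exact Or.inr (mc_mono hE2mc Set.subset_union_left Set.subset_union_right
        (hE2base Γ Δ h))
  intro Γ Δ
  constructor
  · intro h
    exact hC12least Cn' hCn'mc hCn'base Γ Δ h
  · intro h
    apply hC12mc.2.2.1 Γ Δ Set.univ
    intro Ω1 Ω2 hu hd
    rcases h Ω1 Ω2 hu hd with h' | h'
    · exact hE1le _ _ h'
    · exact hE2le _ _ h'

end Paper
end

section
/- Let M₁ = ⟨V₁, D₁, ·₁⟩ and M₂ = ⟨V₂, D₂, ·₂⟩ be PNmatrices over signatures Σ₁, Σ₂. Then the set of bivaluations induced by the strict product M₁ ∗ M₂ equals the intersection of the sets of bivaluations induced by the extensions M₁^{Σ₁∪Σ₂} and M₂^{Σ₁∪Σ₂}: BVal(M₁ ∗ M₂) = BVal(M₁^{Σ₁∪Σ₂}) ∩ BVal(M₂^{Σ₁∪Σ₂}). -/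
set_option autoImplicit false

namespace Paper

variable {C : Type} {ar : C → ℕ}

/-- `BVal(M₁ ∗ M₂) = BVal(M₁^{Σ₁∪Σ₂}) ∩ BVal(M₂^{Σ₁∪Σ₂})`. -/
theorem statement5 {C : Type} {ar : C → ℕ} {S1 S2 : Set C}
    (M1 : PN C ar S1) (M2 : PN C ar S2) :
    BVal (sprod M1 M2) =
      BVal (extPN (unionLeft : S1 ⊆ S1 ∪ S2) M1) ∩
        BVal (extPN (unionRight : S2 ⊆ S1 ∪ S2) M2) := by
  ext b
  constructor
  · rintro ⟨v, hv, rfl⟩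
    constructor
    · refine ⟨fun A => (v A).val.1, ?_, ?_⟩
      · intro c h args hc
        exact (hv c h args).1 hc
      · funext A
        apply propext
        constructor
        · rintro ⟨h1, _⟩; exact h1
        · intro h1; exact ⟨h1, (v A).property.mp h1⟩
    · refine ⟨fun A => (v A).val.2, ?_, ?_⟩
      · intro c h args hc
        exact (hv c h args).2 hc
      · funext A
        apply propext
        constructor
        · rintro ⟨_, h2⟩; exact h2
        · intro h2; exact ⟨(v A).property.mpr h2, h2⟩
  · rintro ⟨⟨v1, hv1, hb1⟩, ⟨v2, hv2, hb2⟩⟩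
    have hiff : ∀ A, v1 A ∈ M1.D ↔ v2 A ∈ M2.D := by
      intro A
      constructor
      · intro h; rw [← show b A = (v2 A ∈ M2.D) from congrFun hb2 A]
        rw [show b A = (v1 A ∈ M1.D) from congrFun hb1 A]; exact h
      · intro h; rw [← show b A = (v1 A ∈ M1.D) from congrFun hb1 A]
        rw [show b A = (v2 A ∈ M2.D) from congrFun hb2 A]; exact h
    refine ⟨fun A => ⟨(v1 A, v2 A), hiff A⟩, ?_, ?_⟩
    · intro c h args
      exact ⟨fun hc => hv1 c h args hc, fun hc => hv2 c h args hc⟩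
    · funext A
      apply propext
      constructor
      · intro hA
        have h1 : v1 A ∈ M1.D := by
          rw [← show b A = (v1 A ∈ M1.D) from congrFun hb1 A]; exact hA
        exact ⟨h1, (hiff A).mp h1⟩
      · rintro hA
        rw [show b A = (v1 A ∈ M1.D) from congrFun hb1 A]
        exact hA.1

end Paper
end

section
/- For sets of bivaluations B, B' over the same signature with B closed under substitutions: ⊢_B ⊆ ⊢_{B'} if and only if B' ⊆ B^∩, where B^∩ is the meet-closure of B. In particular, two sets of bivaluations characterize the same single-conclusion logic iff their meet-closures coincide. -/
set_option autoImplicit false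

namespace Paper

variable {C : Type} {ar : C → ℕ}

/-- `⊢_B ⊆ ⊢_{B'}` iff `B' ⊆ B^∩`; in particular two sets of
bivaluations determine the same single-conclusion logic iff their
meet-closures coincide. -/
theorem statement7 {C : Type} {ar : C → ℕ} {S : Set C}
    (B B' : Set (Fm C ar S → Prop))
    (hB : SubstClosed B) (hB' : SubstClosed B') :
    ((∀ Γ A, scBiv B Γ A → scBiv B' Γ A) ↔ B' ⊆ meetCl B) ∧
    (scBiv B = scBiv B' ↔ meetCl B = meetCl B') := by

  classical
  have key : ∀ (B1 B2 : Set (Fm C ar S → Prop)),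
      (∀ Γ A, scBiv B1 Γ A → scBiv B2 Γ A) ↔ B2 ⊆ meetCl B1 := by
    intro B1 B2
    constructor
    · intro h b' hb'
      refine ⟨{b | b ∈ B1 ∧ ∀ A, b' A → b A}, fun b hb => hb.1, ?_⟩
      funext A
      apply propext
      constructor
      · intro hA b hb
        exact hb.2 A hA
      · intro hA
        have hsc : scBiv B1 {D | b' D} A := by
          intro c hc hΓ
          exact hA c ⟨hc, fun D hD => hΓ D hD⟩
        exact h _ _ hsc b' hb' (fun D hD => hD)
    · intro hsub Γ A hBA b' hb' hΓ
      obtain ⟨X, hX, rfl⟩ := hsub hb'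
      intro b hb
      exact hBA b (hX hb) (fun D hD => hΓ D hD b hb)
  have mono : ∀ (B1 B2 : Set (Fm C ar S → Prop)),
      B2 ⊆ meetCl B1 → meetCl B2 ⊆ meetCl B1 := by
    intro B1 B2 h b hb
    obtain ⟨X, hX, rfl⟩ := hb
    choose Y hY hYeq using fun b (hb : b ∈ X) => h (hX hb)
    refine ⟨⋃ (b : _) (hb : b ∈ X), Y b hb, ?_, ?_⟩
    · simp only [Set.iUnion_subset_iff]
      exact fun b hb => hY b hb
    · funext A
      apply propext
      constructor
      · intro hA c hc
        simp only [Set.mem_iUnion] at hc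
        obtain ⟨b, hb, hcY⟩ := hc
        have := hA b hb
        rw [hYeq b hb] at this
        exact this c hcY
      · intro hA b hb
        rw [hYeq b hb]
        intro c hc
        exact hA c (Set.mem_iUnion.2 ⟨b, Set.mem_iUnion.2 ⟨hb, hc⟩⟩)
  have self : ∀ (B1 : Set (Fm C ar S → Prop)), B1 ⊆ meetCl B1 := by
    intro B1 b hb
    refine ⟨{b}, by simpa using hb, ?_⟩
    funext A
    apply propext
    simp
  refine ⟨key B B', ?_⟩
  constructor
  · intro h
    have h1 : B' ⊆ meetCl B := (key B B').1 (fun Γ A hΓ => h ▸ hΓ)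
    have h2 : B ⊆ meetCl B' := (key B' B).1 (fun Γ A hΓ => h ▸ hΓ)
    exact le_antisymm (mono B' B h2) (mono B B' h1)
  · intro h
    funext Γ A
    apply propext
    constructor
    · exact fun hΓ => (key B B').2 (h ▸ self B') Γ A hΓ
    · exact fun hΓ => (key B' B).2 (h ▸ self B) Γ A hΓ

end Paper
end

section
/- Let ⊢₁₂ be the combination of single-conclusion logics ⊢₁, ⊢₂ over Σ₁, Σ₂. For all Γ ∪ {A} ⊆ Form_{Σ₁∪Σ₂}: Γ ⊢₁₂ A if and only if for every set Ω with Γ ⊆ Ω ⊆ Form_{Σ₁∪Σ₂}, if Ω is a theory of both extensions ⊢₁^{Σ₁∪Σ₂} and ⊢₂^{Σ₁∪Σ₂}, then A ∈ Ω. -/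
set_option autoImplicit false

namespace Paper

variable {C : Type} {ar : C → ℕ}

/-- abstract characterization of the combined single-conclusion
logic via common theories of the extensions. -/
theorem statement9 {C : Type} {ar : C → ℕ} {S1 S2 : Set C}
    (L1 : Set (Fm C ar S1) → Fm C ar S1 → Prop)
    (L2 : Set (Fm C ar S2) → Fm C ar S2 → Prop)
    (L12 E1 E2 : Set (Fm C ar (S1 ∪ S2)) → Fm C ar (S1 ∪ S2) → Prop)
    (h1 : IsSC L1) (h2 : IsSC L2)
    (hC : IsCombSC L1 L2 L12)
    (hE1 : LeastSC (embRelSC unionLeft L1) E1)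
    (hE2 : LeastSC (embRelSC unionRight L2) E2) :
    ∀ Γ A, L12 Γ A ↔
      ∀ Ω, Γ ⊆ Ω → IsTheorySC E1 Ω → IsTheorySC E2 Ω → A ∈ Ω := by
  -- The candidate logic L'
  set L' : Set (Fm C ar (S1 ∪ S2)) → Fm C ar (S1 ∪ S2) → Prop :=
    fun Γ A => ∀ Ω, Γ ⊆ Ω → IsTheorySC E1 Ω → IsTheorySC E2 Ω → A ∈ Ω with hL'
  have hE1sc := hE1.1
  have hE2sc := hE2.1
  -- L' is an SC logic
  have hSC : IsSC L' := by
    refine ⟨?_, ?_, ?_, ?_⟩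
    · intro Γ A hA Ω hΓ _ _; exact hΓ hA
    · intro Γ Γ' A hsub h Ω hΓ t1 t2; exact h Ω (fun x hx => hΓ (hsub hx)) t1 t2
    · intro Γ Δ A hΔ h Ω hΓ t1 t2
      refine h Ω ?_ t1 t2
      intro x hx
      cases hx with
      | inl hx => exact hΓ hx
      | inr hx => exact hΔ x hx Ω hΓ t1 t2
    · intro σ Γ A h Ω hΓ t1 t2
      have h' := h (subst σ ⁻¹' Ω) (fun x hx => hΓ ⟨x, hx, rfl⟩) ?_ ?_
      · exact h'
      · intro B hB
        have := hE1sc.2.2.2 σ _ _ hB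
        have hmono := hE1sc.2.1 _ Ω _ (by
          rintro _ ⟨y, hy, rfl⟩; exact hy) this
        exact t1 _ hmono
      · intro B hB
        have := hE2sc.2.2.2 σ _ _ hB
        have hmono := hE2sc.2.1 _ Ω _ (by
          rintro _ ⟨y, hy, rfl⟩; exact hy) this
        exact t2 _ hmono
  -- L' contains the base
  have hBase : ∀ Γ A, (embRelSC unionLeft L1 Γ A ∨ embRelSC unionRight L2 Γ A) → L' Γ A := by
    intro Γ A h Ω hΓ t1 t2
    cases h with
    | inl h =>
      have := hE1.2.1 _ _ h
      exact t1 _ (hE1sc.2.1 _ Ω _ hΓ this)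
    | inr h =>
      have := hE2.2.1 _ _ h
      exact t2 _ (hE2sc.2.1 _ Ω _ hΓ this)
  -- E1, E2 are contained in L12
  have hL12sc := hC.1
  have hE1L12 : ∀ Γ A, E1 Γ A → L12 Γ A :=
    hE1.2.2 L12 hL12sc (fun Γ A h => hC.2.1 Γ A (Or.inl h))
  have hE2L12 : ∀ Γ A, E2 Γ A → L12 Γ A :=
    hE2.2.2 L12 hL12sc (fun Γ A h => hC.2.1 Γ A (Or.inr h))
  intro Γ A
  constructor
  · intro h
    exact hC.2.2 L' hSC hBase Γ A h
  · intro h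
    have key : A ∈ {B | L12 Γ B} := by
      refine h _ ?_ ?_ ?_
      · intro x hx; exact hL12sc.1 Γ x hx
      · intro B hB
        have : L12 (Γ ∪ {B' | L12 Γ B'}) B :=
          hL12sc.2.1 _ _ _ Set.subset_union_right (hE1L12 _ _ hB)
        exact hL12sc.2.2.1 Γ _ B (fun x hx => hx) this
      · intro B hB
        have : L12 (Γ ∪ {B' | L12 Γ B'}) B :=
          hL12sc.2.1 _ _ _ Set.subset_union_right (hE2L12 _ _ hB)
        exact hL12sc.2.2.1 Γ _ B (fun x hx => hx) this
    exact key

end Paper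
end

section
/- A PNmatrix ⟨Σ, M⟩ is saturated if and only if BVal(M)^∩ = {𝟙} ∪ BVal(M), where 𝟙 is the constant-1 bivaluation. -/
set_option autoImplicit false

namespace Paper

variable {C : Type} {ar : C → ℕ}

/-- a PNmatrix is saturated iff the meet-closure of its
bivaluations is `{𝟙} ∪ BVal(M)`. -/
theorem statement10 {C : Type} {ar : C → ℕ} {S : Set C} (M : PN C ar S) :
    Saturated M ↔ meetCl (BVal M) = insert (fun _ => True) (BVal M) := by
  constructor
  · intro hsat
    ext b
    simp only [meetCl, Set.mem_setOf_eq, Set.mem_insert_iff]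
    constructor
    · rintro ⟨X, hX, rfl⟩
      by_cases h1 : ∀ A, ∀ b' ∈ X, b' A
      · left
        funext A
        exact propext ⟨fun _ => trivial, fun _ => h1 A⟩
      · right
        push_neg at h1
        set Γ : Set (Fm C ar S) := {A | ∀ b' ∈ X, b' A} with hΓ
        have hth : IsTheorySC (scPN M) Γ := by
          intro A hA b' hb'
          exact hA b' (hX hb') (fun B hB => hB b' hb')
        have hne : Γ ≠ Set.univ := by
          obtain ⟨A, b', hb', hnb⟩ := h1
          intro h
          exact hnb ((h ▸ Set.mem_univ A : A ∈ Γ) b' hb')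
        obtain ⟨v, hv, hΓv⟩ := hsat Γ hth hne
        refine ⟨v, hv, ?_⟩
        funext A
        have : (A ∈ Γ) ↔ v A ∈ M.D := by rw [hΓv]; rfl
        exact propext this
    · rintro (rfl | hb)
      · exact ⟨∅, by simp, by funext A; simp⟩
      · refine ⟨{b}, by simpa, ?_⟩
        funext A
        exact propext ⟨fun h b' hb' => hb' ▸ h, fun h => h b rfl⟩
  · intro heq Γ hth hne
    set X : Set (Fm C ar S → Prop) := {b | b ∈ BVal M ∧ ∀ A ∈ Γ, b A} with hXdef
    have hmem : (fun A => ∀ b' ∈ X, b' A) ∈ meetCl (BVal M) :=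
      ⟨X, fun b hb => hb.1, rfl⟩
    rw [heq] at hmem
    have hiff : ∀ A, (∀ b' ∈ X, b' A) ↔ A ∈ Γ := by
      intro A
      constructor
      · intro h
        apply hth
        intro b hb hbΓ
        exact h b ⟨hb, hbΓ⟩
      · intro hA b hb
        exact hb.2 A hA
    rcases hmem with h1 | hB
    · exfalso
      apply hne
      ext A
      simp only [Set.mem_univ, iff_true]
      have h2 := congrFun h1 A
      exact (hiff A).mp (h2 ▸ trivial)
    · obtain ⟨v, hv, hbv⟩ := hB
      refine ⟨v, hv, ?_⟩
      ext A
      have h2 := congrFun hbv A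
      rw [Set.mem_setOf_eq, ← h2, hiff A]

end Paper
end
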